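/- Let Φ be a propositional formula rewritten as a disjunction of Horn clauses Φ' = Φ'_1 ∨ … ∨ Φ'_k, and let H(Φ, Φ') be the set of agents controlling at least one variable occurring in some single Horn disjunct Φ'_i whose modification can turn Φ from false to true. If a state θ falsifies Φ and a state θ' is obtained from θ by modifying only variables controlled by agents not in H(Φ, Φ'), then θ' also falsifies Φ. -/

import Mathlib

/-- Propositional formulas over variables in `V`. -/
inductive PropForm (V : Type*) where
  | var : V → PropForm V
  | neg : PropForm V → PropForm V
  | and : PropForm V → PropForm V → PropForm V
  | or  : PropForm V → PropForm V → PropForm V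

def PropForm.eval {V : Type*} (θ : V → Bool) : PropForm V → Bool
  | .var v => θ v
  | .neg φ => !(φ.eval θ)
  | .and φ ψ => φ.eval θ && ψ.eval θ
  | .or φ ψ => φ.eval θ || ψ.eval θ

structure Lit (V : Type*) where
  var : V
  pos : Bool

def Lit.eval {V : Type*} (θ : V → Bool) (l : Lit V) : Bool :=
  if l.pos then θ l.var else !(θ l.var)

abbrev Clause (V : Type*) := List (Lit V)

def Clause.eval {V : Type*} (θ : V → Bool) (c : Clause V) : Bool :=
  List.any c (fun l => l.eval θ)

/-- Evaluation of a CNF (a Horn disjunct). -/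
def CNF.eval {V : Type*} (θ : V → Bool) (cnf : List (Clause V)) : Bool :=
  List.all cnf (fun c => c.eval θ)

/-- A CNF is Horn iff every clause has at most one positive literal. -/
def IsHorn {V : Type*} (cnf : List (Clause V)) : Prop :=
  ∀ c ∈ cnf, (List.filter (fun l => l.pos) c).length ≤ 1

/-- The variable `v` occurs in the Horn disjunct `d`. -/
def occursIn {V : Type*} (v : V) (d : List (Clause V)) : Prop :=
  ∃ c ∈ d, ∃ l ∈ c, l.var = v

/-- `H Φ ds control` : the set of agents controlling at least one variable that
occurs in a single Horn disjunct of the rewriting `ds` of `Φ` and whose flipping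
can turn `Φ` from false to true in some state. -/
def H {V Ag : Type*} [DecidableEq V] (Φ : PropForm V) (ds : List (List (Clause V)))
    (control : V → Ag) : Set Ag :=
  {a | ∃ v, control v = a ∧ (∃ d ∈ ds, occursIn v d) ∧
        ∃ θ : V → Bool, Φ.eval θ = false ∧
          Φ.eval (Function.update θ v (!θ v)) = true}

/-! Since `Φ ≡ Φ'`, the truth value of `Φ` depends only on the variables occurring in `Φ'`, so
we may pass from `θ` to `θ'` by changing those variables one at a time. Each variable that
actually changes is controlled by an agent outside `H(Φ, Φ')`, so by the definition of `H`
flipping it cannot turn `Φ` from false to true, and falsity survives every step. -/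

open Function

theorem Finset.piecewise_mem_of_update_mem {α β : Type*} [DecidableEq α] (s : Finset α)
    {f g : α → β} {S : Set (α → β)} (hg : g ∈ S)
    (hS : ∀ a ∈ s, f a ≠ g a → ∀ h ∈ S, update h a (f a) ∈ S) :
    s.piecewise f g ∈ S := by
  induction s using Finset.induction_on with
  | empty => rwa [Finset.piecewise_empty]
  | insert a s ha ih =>
    rw [Finset.piecewise_insert]
    have hrest := ih fun b hb => hS b (Finset.mem_insert_of_mem hb)
    by_cases hfg : f a = g a
    · rwa [hfg, ← s.piecewise_eq_of_notMem f g ha, update_eq_self]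
    · exact hS a (Finset.mem_insert_self a s) hfg _ hrest

theorem CNF.eval_congr {V : Type*} {θ θ' : V → Bool} {d : List (Clause V)}
    (h : ∀ v, occursIn v d → θ v = θ' v) : CNF.eval θ d = CNF.eval θ' d := by
  unfold CNF.eval Clause.eval Lit.eval occursIn at *
  grind

def occurringVars {V : Type*} [DecidableEq V] (ds : List (List (Clause V))) : Finset V :=
  (ds.flatMap fun d => d.flatMap fun c => c.map Lit.var).toFinset

theorem mem_occurringVars {V : Type*} [DecidableEq V] {ds : List (List (Clause V))} {v : V} :
    v ∈ occurringVars ds ↔ ∃ d ∈ ds, occursIn v d := by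
  simp [occurringVars, occursIn]

theorem PropForm.eval_update_eq_false_of_notMem_H {V Ag : Type*} [DecidableEq V]
    {Φ : PropForm V} {ds : List (List (Clause V))} {control : V → Ag} {v : V}
    (hocc : ∃ d ∈ ds, occursIn v d) (hv : control v ∉ H Φ ds control)
    {θ : V → Bool} (hθ : Φ.eval θ = false) (b : Bool) :
    Φ.eval (update θ v b) = false := by
  by_cases hb : b = θ v
  · rwa [hb, update_eq_self]
  · rw [Bool.eq_not.mpr hb]
    by_contra hflip
    exact hv ⟨v, rfl, hocc, θ, hθ, by simpa using hflip⟩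

theorem falsify_preserved_general {V Ag : Type*} [DecidableEq V]
    (Φ : PropForm V) (ds : List (List (Clause V)))
    (hequiv : ∀ θ : V → Bool, Φ.eval θ = List.any ds (fun d => CNF.eval θ d))
    (control : V → Ag)
    (θ θ' : V → Bool)
    (hmod : ∀ v, θ v ≠ θ' v → control v ∉ H Φ ds control)
    (hfalse : Φ.eval θ = false) :
    Φ.eval θ' = false := by
  have hagree : Φ.eval θ' = Φ.eval ((occurringVars ds).piecewise θ' θ) := by
    rw [hequiv, hequiv, Bool.eq_iff_iff, List.any_eq_true, List.any_eq_true]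
    refine exists_congr fun d => and_congr_right fun hd => ?_
    rw [CNF.eval_congr fun v hv =>
      (Finset.piecewise_eq_of_mem _ _ _ (mem_occurringVars.mpr ⟨d, hd, hv⟩)).symm]
  rw [hagree]
  refine (occurringVars ds).piecewise_mem_of_update_mem (S := {σ | Φ.eval σ = false}) hfalse ?_
  intro v hv hne σ hσ
  exact PropForm.eval_update_eq_false_of_notMem_H (mem_occurringVars.mp hv)
    (hmod v (Ne.symm hne)) hσ (θ' v)

/-- If `Φ'` (given by the list of Horn disjuncts `ds`) is a rewriting of `Φ` as a
disjunction of Horn clauses, no agent of `H(Φ,Φ')` modifies variables (i.e., all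
variables on which θ' differs from θ are controlled by agents outside `H(Φ,Φ')`),
and `θ` falsifies `Φ`, then `θ'` also falsifies `Φ`. -/
theorem falsify_preserved {V Ag : Type*} [Fintype V] [DecidableEq V]
    (Φ : PropForm V) (ds : List (List (Clause V)))
    (hhorn : ∀ d ∈ ds, IsHorn d)
    (hequiv : ∀ θ : V → Bool, Φ.eval θ = List.any ds (fun d => CNF.eval θ d))
    (control : V → Ag)
    (θ θ' : V → Bool)
    (hmod : ∀ v, θ v ≠ θ' v → control v ∉ H Φ ds control)
    (hfalse : Φ.eval θ = false) :
    Φ.eval θ' = false :=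
  falsify_preserved_general Φ ds hequiv control θ θ' hmod hfalse
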